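/- Let t ∈ ℝ with t ≠ 0 and set s = 1 + it. Let f : ℂ → ℂ be holomorphic and bounded on 𝔻, not identically zero on 𝔻, and let λ ∈ ℂ be such that Σ_{n=1}^∞ (x+n)^{−2s} f(1/(x+n)) = λ f(x) for all x ∈ [0,1], where (x+n)^{−2s} := exp(−2s·log(x+n)) with the real logarithm. Then |λ| < 1. -/

import Mathlib

open Complex

/-- The disc `𝔻 = {z : |z − 2/3| < 1}`. -/
def gaussDisc : Set ℂ := Metric.ball ((2:ℂ)/3) 1

/-!
Let `h(x) = ‖f x‖ (1 + x)` and `yₙ(x) = 1 / (x + n + 1)`. The `n`-th term of the series has norm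
`h(yₙ(x)) / ((x + n + 1)(x + n + 2))`, and these weights sum to `1 / (x + 1)`. So at a point `x₀`
where `h` is maximal on `[0, 1]` (and positive, by the identity theorem), `‖λ‖ ≥ 1` forces equality
in every estimate: `h(yₙ(x₀)) = h(x₀)` for all `n`, whence `f 0 ≠ 0`, and all terms of the series
have the same argument. That argument is the one of `(x₀ + n + 1)^(-2it) f(yₙ(x₀))`, so the phases
`(x₀ + n + 1)^(-2it)` would converge; they do not, as `log (x₀ + n + 1) → ∞` with steps tending
to `0`.
-/

open Filter Topology Set ComplexConjugate

lemma norm_eq_of_hasSum_of_le_norm_tsum {ι E : Type*} [SeminormedAddCommGroup E] {a : ι → E}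
    {b : ι → ℝ} {B : ℝ} (hb : HasSum b B) (hab : ∀ i, ‖a i‖ ≤ b i) (hB : B ≤ ‖∑' i, a i‖)
    (i : ι) : ‖a i‖ = b i := by
  have hs : Summable (‖a ·‖) := .of_nonneg_of_le (fun _ => norm_nonneg _) hab hb.summable
  by_contra hne
  have := Summable.tsum_lt_tsum hab (lt_of_le_of_ne (hab i) hne) hs hb.summable
  linarith [norm_tsum_le_tsum_norm hs, hb.tsum_eq]

lemma Complex.mul_conj_eq_of_tsum_norm_le {ι : Type*} {a : ι → ℂ} {S : ℂ} (hS : HasSum a S)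
    (hs : Summable (‖a ·‖)) (hle : ∑' i, ‖a i‖ ≤ ‖S‖) (i : ι) :
    a i * conj S = ‖a i‖ * ‖S‖ := by
  set r : ι → ℝ := fun i => ‖a i‖ * ‖S‖ - (a i * conj S).re
  have hr0 : ∀ i, 0 ≤ r i := fun i => sub_nonneg.2 <| (re_le_norm _).trans_eq (by simp)
  have hr : HasSum r ((∑' i, ‖a i‖) * ‖S‖ - ‖S‖ ^ 2) := by
    have := hasSum_re (hS.mul_right (conj S))
    rw [mul_conj, normSq_eq_norm_sq, ofReal_re] at this
    exact (hs.hasSum.mul_right _).sub this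
  have hsum0 : (∑' i, ‖a i‖) * ‖S‖ - ‖S‖ ^ 2 = 0 :=
    le_antisymm (by nlinarith [norm_nonneg S]) (hr.nonneg hr0)
  rw [hsum0, hasSum_zero_iff_of_nonneg hr0] at hr
  have hre : (a i * conj S).re = ‖a i * conj S‖ := by
    have := congrFun hr i
    simp only [r, Pi.zero_apply, sub_eq_zero] at this
    simp [this]
  rw [eq_re_of_ofReal_le (re_eq_norm.1 hre), hre]
  simp

lemma hasSum_inv_add_nat_add_one_mul_add_two {x : ℝ} (hx : 0 ≤ x) :
    HasSum (fun n : ℕ => ((x + n + 1) * (x + n + 2))⁻¹) (x + 1)⁻¹ := by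
  set u : ℕ → ℝ := fun n => (x + n + 1)⁻¹
  have hterm : ∀ n : ℕ, ((x + n + 1) * (x + n + 2))⁻¹ = u n - u (n + 1) := by
    intro n
    simp only [u]
    push_cast
    field_simp
    ring
  have hu : Tendsto u atTop (𝓝 0) :=
    tendsto_inv_atTop_zero.comp <| tendsto_atTop_add_const_right _ _ <|
      tendsto_atTop_add_const_left _ _ tendsto_natCast_atTop_atTop
  rw [hasSum_iff_tendsto_nat_of_nonneg (fun n => by positivity)]
  simp_rw [hterm, Finset.sum_range_sub']
  simpa [u] using tendsto_const_nhds.sub hu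

lemma Complex.not_tendsto_exp_ofReal_mul_I_atTop {β : ℝ} (hβ : β ≠ 0) (L : ℂ) :
    ¬Tendsto (fun s : ℝ => exp ((β * s : ℝ) * I)) atTop (𝓝 L) := by
  intro h
  -- shifting `s` by `π / β` flips the sign, so `L = -L`; but `‖L‖ = 1`
  have hshift : Tendsto (fun s : ℝ => -exp ((β * s : ℝ) * I)) atTop (𝓝 L) := by
    refine (h.comp (tendsto_atTop_add_const_right _ (Real.pi / β) tendsto_id)).congr fun s => ?_
    simp only [Function.comp_apply, id, mul_add, mul_div_cancel₀ _ hβ, ofReal_add, add_mul,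
      exp_add, exp_pi_mul_I, mul_neg_one]
  have hL : L = 0 := by
    have := tendsto_nhds_unique hshift h.neg
    linear_combination this / 2
  have hnorm := h.norm
  simp only [norm_exp_ofReal_mul_I, hL, norm_zero] at hnorm
  exact one_ne_zero (tendsto_nhds_unique tendsto_const_nhds hnorm)

lemma Complex.not_tendsto_exp_mul_log_add_nat_mul_I {β : ℝ} (hβ : β ≠ 0) (x : ℝ) (L : ℂ) :
    ¬Tendsto (fun n : ℕ => exp ((β * Real.log (x + n + 1) : ℝ) * I)) atTop (𝓝 L) := by
  intro h
  -- `log (x + m s + 1)` lies in `[s, log (exp s + 1)]`, so it follows `s` along `atTop`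
  set m : ℝ → ℕ := fun s => ⌊Real.exp s - x⌋₊
  set δ : ℝ → ℝ := fun s => Real.log (x + m s + 1) - s
  have hδ : Tendsto δ atTop (𝓝 0) := by
    have hbounds : ∀ᶠ s in atTop,
        0 ≤ δ s ∧ δ s ≤ Real.log (Real.exp s + 1) - Real.log (Real.exp s) := by
      filter_upwards [Real.tendsto_exp_atTop.eventually_ge_atTop x] with s hs
      have hlt := Nat.lt_floor_add_one (Real.exp s - x)
      have hle := Nat.floor_le (sub_nonneg.2 hs)
      have h₁ := Real.log_le_log (Real.exp_pos s) (show Real.exp s ≤ x + m s + 1 by linarith)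
      have h₂ := Real.log_le_log (by linarith [Real.exp_pos s])
        (show x + m s + 1 ≤ Real.exp s + 1 by linarith)
      simp only [δ, Real.log_exp] at h₁ h₂ ⊢
      constructor <;> linarith
    exact tendsto_of_tendsto_of_tendsto_of_le_of_le' tendsto_const_nhds
      ((Real.tendsto_log_comp_add_sub_log 1).comp Real.tendsto_exp_atTop)
      (hbounds.mono fun _ => And.left) (hbounds.mono fun _ => And.right)
  have hm : Tendsto m atTop atTop :=
    tendsto_nat_floor_atTop.comp (tendsto_atTop_add_const_right _ (-x) Real.tendsto_exp_atTop)
  have hphase : Tendsto (fun s => exp ((β * δ s : ℝ) * I)) atTop (𝓝 1) := by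
    have hcont : Continuous fun r : ℝ => exp ((β * r : ℝ) * I) := by fun_prop
    simpa [Function.comp_def] using (hcont.tendsto 0).comp hδ
  have hlim := (h.comp hm).div hphase one_ne_zero
  rw [div_one] at hlim
  refine not_tendsto_exp_ofReal_mul_I_atTop hβ L (hlim.congr fun s => ?_)
  show exp _ / exp _ = _
  rw [← exp_sub]
  simp only [δ]
  push_cast
  ring_nf

lemma ofReal_mem_gaussDisc {x : ℝ} (hx : x ∈ Icc (0 : ℝ) 1) : (x : ℂ) ∈ gaussDisc := by
  rw [gaussDisc, Metric.mem_ball, dist_eq, show (x : ℂ) - 2 / 3 = ((x - 2 / 3 : ℝ) : ℂ) by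
    push_cast; ring, norm_real, Real.norm_eq_abs, abs_lt]
  constructor <;> linarith [hx.1, hx.2]

lemma zero_mem_gaussDisc : (0 : ℂ) ∈ gaussDisc := by
  simpa only [ofReal_zero] using ofReal_mem_gaussDisc (x := 0) ⟨le_rfl, zero_le_one⟩

lemma inv_add_nat_add_one_mem_Icc {x : ℝ} (hx : 0 ≤ x) (n : ℕ) :
    (x + n + 1)⁻¹ ∈ Icc (0 : ℝ) 1 :=
  ⟨by positivity, inv_le_one_of_one_le₀ (by linarith [n.cast_nonneg (α := ℝ)])⟩

lemma exists_mem_Icc_ne_zero_of_differentiableOn_gaussDisc {f : ℂ → ℂ}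
    (hf : DifferentiableOn ℂ f gaussDisc) (hne : ∃ z ∈ gaussDisc, f z ≠ 0) :
    ∃ x ∈ Icc (0 : ℝ) 1, f x ≠ 0 := by
  by_contra! hzero
  obtain ⟨z, hz, hfz⟩ := hne
  have hhalf : ((1 / 2 : ℝ) : ℂ) ∈ gaussDisc := ofReal_mem_gaussDisc ⟨by norm_num, by norm_num⟩
  have hreal : Tendsto ofReal (𝓝[≠] (1 / 2 : ℝ)) (𝓝[≠] ((1 / 2 : ℝ) : ℂ)) :=
    continuous_ofReal.continuousWithinAt.tendsto_nhdsWithin fun _ hy => ofReal_injective.ne hy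
  have hfreq : ∃ᶠ w in 𝓝[≠] ((1 / 2 : ℝ) : ℂ), f w = 0 := by
    refine hreal.frequently (Eventually.frequently ?_)
    filter_upwards [nhdsWithin_le_nhds (Icc_mem_nhds (by norm_num : (0 : ℝ) < 1 / 2)
      (by norm_num : (1 / 2 : ℝ) < 1))] with x hx using hzero x hx
  exact hfz ((hf.analyticOnNhd Metric.isOpen_ball).eqOn_zero_of_preconnected_of_frequently_eq_zero
    (convex_ball _ _).isPreconnected hhalf hfreq hz)

noncomputable def weightedNorm (f : ℂ → ℂ) (x : ℝ) : ℝ := ‖f x‖ * (1 + x)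

lemma weightedNorm_mul_inv {f : ℂ → ℂ} {x : ℝ} (hx : 0 ≤ x) :
    weightedNorm f x * (x + 1)⁻¹ = ‖f x‖ := by
  rw [weightedNorm, add_comm x, mul_inv_cancel_right₀ (by linarith)]

lemma continuousOn_weightedNorm {f : ℂ → ℂ} (hf : DifferentiableOn ℂ f gaussDisc) :
    ContinuousOn (weightedNorm f) (Icc 0 1) :=
  ((hf.continuousOn.comp continuous_ofReal.continuousOn fun _ => ofReal_mem_gaussDisc).norm.mul
    (continuousOn_const.add continuousOn_id))

/-- The summand of index `n + 1` in `(𝓛ₛ f)(x)` for `s = 1 + t i`, written as in the theorem. -/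
noncomputable def transferTerm (t : ℝ) (f : ℂ → ℂ) (x : ℝ) (n : ℕ) : ℂ :=
  exp (-(2 * (1 + t * I)) * (Real.log (x + (n : ℕ) + 1) : ℂ)) * f (1 / ((x : ℂ) + (n : ℕ) + 1))

section transferTerm

variable {t : ℝ} {f : ℂ → ℂ} {x : ℝ}

lemma transferTerm_eq (hx : 0 ≤ x) (n : ℕ) :
    transferTerm t f x n = (((x + n + 1) ^ 2)⁻¹ : ℝ) *
      exp ((-2 * t * Real.log (x + n + 1) : ℝ) * I) * f ((x + n + 1)⁻¹ : ℝ) := by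
  have hw : 0 < x + n + 1 := by positivity
  have hmod : ((x + n + 1) ^ 2)⁻¹ = Real.exp (-(2 * Real.log (x + n + 1))) := by
    rw [Real.exp_neg, ← Real.log_rpow hw, Real.exp_log (by positivity), Real.rpow_two]
  rw [transferTerm, hmod, ofReal_exp, ← exp_add]
  push_cast
  ring_nf

lemma norm_transferTerm (hx : 0 ≤ x) (n : ℕ) :
    ‖transferTerm t f x n‖ =
      weightedNorm f (x + n + 1)⁻¹ * ((x + n + 1) * (x + n + 2))⁻¹ := by
  have hw : 0 < x + n + 1 := by positivity
  rw [transferTerm_eq hx, norm_mul, norm_mul, norm_exp_ofReal_mul_I, norm_real,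
    Real.norm_of_nonneg (by positivity), weightedNorm]
  field_simp
  ring

lemma weightedNorm_eq_of_isMaxOn {x₀ : ℝ} (hx₀ : x₀ ∈ Icc 0 1)
    (hmax : IsMaxOn (weightedNorm f) (Icc 0 1) x₀)
    (hle : ‖f x₀‖ ≤ ‖∑' n, transferTerm t f x₀ n‖) (n : ℕ) :
    weightedNorm f (x₀ + n + 1)⁻¹ = weightedNorm f x₀ := by
  have hx₀0 : 0 ≤ x₀ := hx₀.1
  have hweights := (hasSum_inv_add_nat_add_one_mul_add_two hx₀0).mul_left (weightedNorm f x₀)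
  have hbound (k : ℕ) :
      ‖transferTerm t f x₀ k‖ ≤ weightedNorm f x₀ * ((x₀ + k + 1) * (x₀ + k + 2))⁻¹ :=
    (norm_transferTerm hx₀0 k).trans_le <| mul_le_mul_of_nonneg_right
      (hmax (inv_add_nat_add_one_mem_Icc hx₀0 k)) (by positivity)
  have hterm := norm_eq_of_hasSum_of_le_norm_tsum hweights hbound
    ((weightedNorm_mul_inv hx₀0).trans_le hle) n
  exact mul_right_cancel₀ (by positivity) ((norm_transferTerm hx₀0 n).symm.trans hterm)

lemma hasSum_norm_transferTerm (hx : 0 ≤ x)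
    (horbit : ∀ n : ℕ, weightedNorm f (x + n + 1)⁻¹ = weightedNorm f x) :
    HasSum (‖transferTerm t f x ·‖) ‖f x‖ := by
  simp_rw [norm_transferTerm hx, horbit, ← weightedNorm_mul_inv (f := f) hx]
  exact (hasSum_inv_add_nat_add_one_mul_add_two hx).mul_left _

lemma tendsto_exp_mul_log_of_mul_conj_eq (hx : 0 ≤ x) (hf : ContinuousAt f 0) {G : ℝ}
    (hG : 0 < G) (horbit : ∀ n : ℕ, weightedNorm f (x + n + 1)⁻¹ = G) {S : ℂ} (hS : S ≠ 0)
    (halign : ∀ n, transferTerm t f x n * conj S = ‖transferTerm t f x n‖ * ‖S‖) :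
    Tendsto (fun n : ℕ => exp ((-2 * t * Real.log (x + n + 1) : ℝ) * I)) atTop
      (𝓝 (‖f 0‖ * ‖S‖ / (f 0 * conj S))) := by
  have hy : Tendsto (fun n : ℕ => (x + n + 1)⁻¹) atTop (𝓝 0) :=
    tendsto_inv_atTop_zero.comp <| tendsto_atTop_add_const_right _ _ <|
      tendsto_atTop_add_const_left _ _ tendsto_natCast_atTop_atTop
  have hF : Tendsto (fun n : ℕ => f ((x + n + 1)⁻¹ : ℝ)) atTop (𝓝 (f 0)) := by
    simpa [Function.comp_def] using hf.tendsto.comp ((continuous_ofReal.tendsto 0).comp hy)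
  have hf0 : f 0 ≠ 0 := by
    have hW : Tendsto (fun n : ℕ => weightedNorm f (x + n + 1)⁻¹) atTop
        (𝓝 (‖f 0‖ * (1 + 0))) :=
      hF.norm.mul (tendsto_const_nhds.add hy)
    simp only [horbit, add_zero, mul_one] at hW
    rw [← norm_pos_iff, ← tendsto_nhds_unique tendsto_const_nhds hW]
    exact hG
  have hFn : ∀ n : ℕ, f ((x + n + 1)⁻¹ : ℝ) ≠ 0 := fun n hzero => by
    have := horbit n
    rw [weightedNorm, hzero, norm_zero, zero_mul] at this
    exact hG.ne this
  have hphase : ∀ n : ℕ, exp ((-2 * t * Real.log (x + n + 1) : ℝ) * I) =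
      ‖f ((x + n + 1)⁻¹ : ℝ)‖ * ‖S‖ / (f ((x + n + 1)⁻¹ : ℝ) * conj S) := by
    intro n
    have h := halign n
    have hc : (((x + n + 1) ^ 2)⁻¹ : ℝ) ≠ 0 := by positivity
    rw [transferTerm_eq hx, norm_mul, norm_mul, norm_exp_ofReal_mul_I, norm_real,
      Real.norm_of_nonneg (by positivity), mul_one] at h
    rw [eq_div_iff (mul_ne_zero (hFn n) ((map_ne_zero _).2 hS))]
    refine mul_left_cancel₀ (ofReal_ne_zero.2 hc) ?_
    simp only [ofReal_mul] at h ⊢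
    linear_combination h
  refine Tendsto.congr (fun n => (hphase n).symm) ?_
  exact (((continuous_ofReal.tendsto _).comp hF.norm).mul_const _).div (hF.mul_const _)
    (mul_ne_zero hf0 ((map_ne_zero _).2 hS))

end transferTerm

theorem transferOp_spectral_radius_line_re_eq_one_general (t : ℝ) (ht : t ≠ 0)
    (f : ℂ → ℂ)
    (hf_holo : DifferentiableOn ℂ f gaussDisc)
    (hf_ne : ∃ z ∈ gaussDisc, f z ≠ 0)
    (lam : ℂ)
    (heig : ∀ x : ℝ, x ∈ Set.Icc (0:ℝ) 1 →
      ∑' n : ℕ, Complex.exp (-(2 * (1 + t * Complex.I)) * (Real.log (x + (n : ℕ) + 1) : ℂ))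
          * f (1 / ((x : ℂ) + (n : ℕ) + 1))
        = lam * f (x : ℂ)) :
    ‖lam‖ < 1 := by
  by_contra! hlam
  obtain ⟨x₀, hx₀, hmax⟩ := isCompact_Icc.exists_isMaxOn (nonempty_Icc.2 zero_le_one)
    (continuousOn_weightedNorm hf_holo)
  obtain ⟨x, hx, hfx⟩ := exists_mem_Icc_ne_zero_of_differentiableOn_gaussDisc hf_holo hf_ne
  have hG : 0 < weightedNorm f x₀ :=
    (mul_pos (norm_pos_iff.2 hfx) (by linarith [hx.1])).trans_le (hmax hx)
  have hfx₀ : f x₀ ≠ 0 := fun h => hG.ne' (by rw [weightedNorm, h, norm_zero, zero_mul])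
  have heig₀ : ∑' n, transferTerm t f x₀ n = lam * f x₀ := heig x₀ hx₀
  have hle : ‖f x₀‖ ≤ ‖lam * f x₀‖ := by
    rw [norm_mul]
    exact le_mul_of_one_le_left (norm_nonneg _) hlam
  have horbit := weightedNorm_eq_of_isMaxOn hx₀ hmax (heig₀ ▸ hle)
  have hnorms := hasSum_norm_transferTerm (t := t) hx₀.1 horbit
  have halign := mul_conj_eq_of_tsum_norm_le (heig₀ ▸ hnorms.summable.of_norm.hasSum)
    hnorms.summable (hnorms.tsum_eq ▸ hle)
  have hf_cont : ContinuousAt f 0 :=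
    hf_holo.continuousOn.continuousAt (Metric.isOpen_ball.mem_nhds zero_mem_gaussDisc)
  exact not_tendsto_exp_mul_log_add_nat_mul_I (by simpa using ht) x₀ _
    (tendsto_exp_mul_log_of_mul_conj_eq hx₀.1 hf_cont hG horbit
      (mul_ne_zero (norm_pos_iff.1 (by linarith)) hfx₀) halign)

theorem transferOp_spectral_radius_line_re_eq_one (t : ℝ) (ht : t ≠ 0)
    (f : ℂ → ℂ)
    (hf_holo : DifferentiableOn ℂ f gaussDisc)
    (hf_bdd : ∃ M : ℝ, ∀ z ∈ gaussDisc, ‖f z‖ ≤ M)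
    (hf_ne : ∃ z ∈ gaussDisc, f z ≠ 0)
    (lam : ℂ)
    (heig : ∀ x : ℝ, x ∈ Set.Icc (0:ℝ) 1 →
      ∑' n : ℕ, Complex.exp (-(2 * (1 + t * Complex.I)) * (Real.log (x + (n : ℕ) + 1) : ℂ))
          * f (1 / ((x : ℂ) + (n : ℕ) + 1))
        = lam * f (x : ℂ)) :
    ‖lam‖ < 1 :=
  transferOp_spectral_radius_line_re_eq_one_general t ht f hf_holo hf_ne lam heig
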